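/- arXiv:2002.10396 — 2 statements merged into one kernel-verified Lean document; each statement's English description precedes it below -/
import Mathlib

section
/- Let p ∈ (1,∞) and let X be a real Banach space that satisfies the hypercube Stein inequality with constant 𝔰 for exponent p and the hypercube UMD⁻ inequality with constant β for exponent p. Then for every positive integer n and all functions f_1,…,f_n : 𝒞_n → X, one has ‖Σ_{i=1}^n Δ^{−1}∂_i f_i‖_{L_p(𝒞_n;X)} ≤ 𝔰 β (2^{−n} Σ_{δ∈𝒞_n} ‖Σ_{i=1}^n δ_i ∂_i f_i‖_{L_p(𝒞_n;X)}^p)^{1/p}. -/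
/-!
In Walsh coordinates, `𝔈^π_{π⁻¹(j)+1} ∂_j h` keeps exactly the terms `ĥ(A) w_A` with `j ∈ A`
for which `j` comes last in `A` in the order given by `π`. For a uniformly random `π` this
happens with probability `1/|A|`, so `Δ⁻¹∂_j h` is the average over `π` of these conditional
expectations. For fixed `π` the functions `𝔈^π_{i+1} ∂_{π(i)} f_{π(i)}` form a martingale
difference sequence, so UMD⁻ followed by Stein bounds their sum by `𝔰β` times the Rademacher
average of the `∂_i f_i`, which does not change when the indices are permuted; the triangle
inequality in `L_p` carries the bound over to the average over `π`.
-/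

noncomputable section

open Finset

/-- The sign `±1` attached to a boolean coordinate of the discrete cube. -/
def sgn (b : Bool) : ℝ := if b then 1 else -1

variable {X : Type*} [NormedAddCommGroup X] [NormedSpace ℝ X]

/-- `L_p` norm of `f : 𝒞_n → X` with respect to the uniform probability measure. -/
def cubeLpNorm (n : ℕ) (p : ℝ) (f : (Fin n → Bool) → X) : ℝ :=
  (((2 : ℝ) ^ n)⁻¹ * ∑ ε : Fin n → Bool, ‖f ε‖ ^ p) ^ (1 / p)

/-- Conditional expectation given the coordinates in `S`: average of `f η` over all
`η` agreeing with `ε` on `S`. -/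
def cubeCondExp (n : ℕ) (S : Finset (Fin n)) (f : (Fin n → Bool) → X) :
    (Fin n → Bool) → X := fun ε =>
  ((2 : ℝ) ^ (n - S.card))⁻¹ •
    ∑ η ∈ univ.filter (fun η : Fin n → Bool => ∀ j ∈ S, η j = ε j), f η

/-- The set of the first `i` coordinates (`0`-based). -/
def firstIdx (n i : ℕ) : Finset (Fin n) := univ.filter fun j => (j : ℕ) < i

/-- `𝔈_i`: conditioning on the first `i` coordinates. -/
def Ei (n i : ℕ) (f : (Fin n → Bool) → X) : (Fin n → Bool) → X :=
  cubeCondExp n (firstIdx n i) f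

/-- `𝔈_i^π`: conditioning on the coordinates `π(1),…,π(i)`. -/
def Epi (n : ℕ) (π : Equiv.Perm (Fin n)) (i : ℕ) (f : (Fin n → Bool) → X) :
    (Fin n → Bool) → X :=
  cubeCondExp n ((firstIdx n i).image π) f

/-- `∂_i`: the `i`-th discrete partial derivative. -/
def cubeDeriv (n : ℕ) (i : Fin n) (f : (Fin n → Bool) → X) : (Fin n → Bool) → X :=
  fun ε => (2 : ℝ)⁻¹ • (f ε - f (Function.update ε i (!(ε i))))

/-- `X` satisfies the hypercube Stein inequality with constant `s` for exponent `p`. -/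
def SteinIneq (X : Type*) [NormedAddCommGroup X] [NormedSpace ℝ X] (p s : ℝ) : Prop :=
  ∀ m : ℕ, 0 < m → ∀ (π : Equiv.Perm (Fin m)) (g : Fin m → (Fin m → Bool) → X),
    (((2 : ℝ) ^ m)⁻¹ * ∑ δ : Fin m → Bool,
        (cubeLpNorm m p fun ε => ∑ i : Fin m, sgn (δ i) • Epi m π ((i : ℕ) + 1) (g i) ε) ^ p) ^ (1 / p)
      ≤ s * (((2 : ℝ) ^ m)⁻¹ * ∑ δ : Fin m → Bool,
        (cubeLpNorm m p fun ε => ∑ i : Fin m, sgn (δ i) • g i ε) ^ p) ^ (1 / p)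

/-- `X` satisfies the hypercube UMD⁻ inequality with constant `b` for exponent `p`. -/
def UMDminusIneq (X : Type*) [NormedAddCommGroup X] [NormedSpace ℝ X] (p b : ℝ) : Prop :=
  ∀ m : ℕ, 0 < m → ∀ (π : Equiv.Perm (Fin m)) (d : Fin m → (Fin m → Bool) → X),
    (∀ i : Fin m, Epi m π ((i : ℕ) + 1) (d i) = d i ∧ Epi m π (i : ℕ) (d i) = 0) →
    cubeLpNorm m p (fun ε => ∑ i : Fin m, d i ε)
      ≤ b * (((2 : ℝ) ^ m)⁻¹ * ∑ δ : Fin m → Bool,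
        (cubeLpNorm m p fun ε => ∑ i : Fin m, sgn (δ i) • d i ε) ^ p) ^ (1 / p)

/-- The Walsh function `w_A`. -/
def walsh (n : ℕ) (A : Finset (Fin n)) (ε : Fin n → Bool) : ℝ := ∏ i ∈ A, sgn (ε i)

/-- The Walsh coefficient `f̂(A)`. -/
def walshCoeff (n : ℕ) (f : (Fin n → Bool) → X) (A : Finset (Fin n)) : X :=
  ((2 : ℝ) ^ n)⁻¹ • ∑ ε : Fin n → Bool, walsh n A ε • f ε

/-- `Δ⁻¹∂_i f = Σ_{A ∋ i} |A|⁻¹ f̂(A) w_A`. -/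
def invLapDeriv (n : ℕ) (i : Fin n) (f : (Fin n → Bool) → X) : (Fin n → Bool) → X :=
  fun ε => ∑ A ∈ univ.filter (fun A : Finset (Fin n) => i ∈ A),
    ((A.card : ℝ)⁻¹ * walsh n A ε) • walshCoeff n f A

lemma sgn_not (a : Bool) : sgn (!a) = -sgn a := by
  cases a <;> norm_num [sgn]

lemma sgn_mul_sgn_add_one (a b : Bool) : sgn a * sgn b + 1 = if b = a then 2 else 0 := by
  cases a <;> cases b <;> norm_num [sgn]

lemma walsh_eq_prod_univ (n : ℕ) (A : Finset (Fin n)) (ε : Fin n → Bool) :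
    walsh n A ε = ∏ i, if i ∈ A then sgn (ε i) else 1 := by
  rw [Finset.prod_ite_mem, univ_inter, walsh]

lemma walsh_update_not (n : ℕ) (A : Finset (Fin n)) (j : Fin n) (ε : Fin n → Bool) :
    walsh n A (Function.update ε j (!ε j)) = (if j ∈ A then -1 else 1) * walsh n A ε := by
  simp only [walsh_eq_prod_univ]
  rw [← Finset.mul_prod_erase univ _ (mem_univ j), ← Finset.mul_prod_erase univ _ (mem_univ j),
    ← mul_assoc]
  congr 1
  · split_ifs <;> simp [sgn_not]
  · refine Finset.prod_congr rfl fun i hi => ?_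
    rw [Function.update_of_ne (ne_of_mem_erase hi)]

lemma sum_walsh_mul_walsh (n : ℕ) (A B : Finset (Fin n)) :
    ∑ ε : Fin n → Bool, walsh n B ε * walsh n A ε = if B = A then 2 ^ n else 0 := by
  have hcoord (i : Fin n) : ∑ b : Bool, (if i ∈ B then sgn b else 1) * (if i ∈ A then sgn b else 1)
      = if (i ∈ B ↔ i ∈ A) then 2 else 0 := by
    by_cases hB : i ∈ B <;> by_cases hA : i ∈ A <;> norm_num [hA, hB, sgn]
  simp only [walsh_eq_prod_univ, ← Finset.prod_mul_distrib]
  rw [← Fintype.prod_sum fun i b => (if i ∈ B then sgn b else 1) * (if i ∈ A then sgn b else 1),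
    Finset.prod_congr rfl fun i _ => hcoord i, Finset.prod_ite_zero]
  simp [Finset.ext_iff]

lemma sum_powerset_walsh_mul_walsh (n : ℕ) (S : Finset (Fin n)) (ε η : Fin n → Bool) :
    ∑ A ∈ S.powerset, walsh n A ε * walsh n A η =
      if ∀ j ∈ S, η j = ε j then 2 ^ S.card else 0 := by
  have hprod : ∏ i ∈ S, (sgn (ε i) * sgn (η i) + 1) =
      ∑ A ∈ S.powerset, walsh n A ε * walsh n A η := by
    simp [Finset.prod_add, walsh, Finset.prod_mul_distrib]
  simp_rw [← hprod, sgn_mul_sgn_add_one, Finset.prod_ite_zero, prod_const]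

lemma walshCoeff_sum_walsh_smul (n : ℕ) (s : Finset (Finset (Fin n))) (x : Finset (Fin n) → X)
    (B : Finset (Fin n)) :
    walshCoeff n (fun ε => ∑ A ∈ s, walsh n A ε • x A) B = if B ∈ s then x B else 0 := by
  simp only [walshCoeff, Finset.smul_sum, smul_smul]
  rw [Finset.sum_comm]
  simp only [← Finset.sum_smul, ← Finset.mul_sum, sum_walsh_mul_walsh, mul_ite, mul_zero,
    inv_mul_cancel₀ (pow_ne_zero n (two_ne_zero' ℝ)), ite_smul, one_smul, zero_smul]
  exact Finset.sum_ite_eq s B x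

lemma cubeCondExp_eq_sum_walsh (n : ℕ) (S : Finset (Fin n)) (f : (Fin n → Bool) → X)
    (ε : Fin n → Bool) :
    cubeCondExp n S f ε = ∑ A ∈ S.powerset, walsh n A ε • walshCoeff n f A := by
  have hS : (2 : ℝ) ^ n = 2 ^ (n - S.card) * 2 ^ S.card := by
    rw [← pow_add, Nat.sub_add_cancel (S.card_le_univ.trans_eq (Fintype.card_fin n))]
  symm
  calc ∑ A ∈ S.powerset, walsh n A ε • walshCoeff n f A
      = ((2 : ℝ) ^ n)⁻¹ • ∑ η, (∑ A ∈ S.powerset, walsh n A ε * walsh n A η) • f η := by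
        simp only [walshCoeff, Finset.smul_sum, Finset.sum_smul, smul_smul]
        rw [Finset.sum_comm]
        simp only [mul_left_comm]
    _ = cubeCondExp n S f ε := by
        simp only [sum_powerset_walsh_mul_walsh, ite_smul, zero_smul, ← Finset.sum_filter,
          cubeCondExp, Finset.smul_sum, smul_smul, hS]
        refine Finset.sum_congr rfl fun η _ => ?_
        rw [mul_inv, mul_assoc, inv_mul_cancel₀ (by positivity), mul_one]

lemma walshCoeff_cubeCondExp (n : ℕ) (S B : Finset (Fin n)) (f : (Fin n → Bool) → X) :
    walshCoeff n (cubeCondExp n S f) B = if B ⊆ S then walshCoeff n f B else 0 := by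
  simp only [funext (cubeCondExp_eq_sum_walsh n S f), walshCoeff_sum_walsh_smul, mem_powerset]

lemma cubeCondExp_cubeCondExp_of_subset (n : ℕ) {S T : Finset (Fin n)} (hTS : T ⊆ S)
    (f : (Fin n → Bool) → X) :
    cubeCondExp n T (cubeCondExp n S f) = cubeCondExp n T f := by
  funext ε
  simp only [cubeCondExp_eq_sum_walsh n T, walshCoeff_cubeCondExp]
  refine Finset.sum_congr rfl fun A hA => ?_
  rw [if_pos ((mem_powerset.1 hA).trans hTS)]

lemma walshCoeff_comp_update_not (n : ℕ) (j : Fin n) (f : (Fin n → Bool) → X)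
    (A : Finset (Fin n)) :
    walshCoeff n (fun ε => f (Function.update ε j (!ε j))) A =
      (if j ∈ A then -1 else 1 : ℝ) • walshCoeff n f A := by
  have hinv : Function.Involutive fun ε : Fin n → Bool => Function.update ε j (!ε j) := by
    intro ε
    simp
  have hflip : ∑ ε, walsh n A ε • f (Function.update ε j (!ε j)) =
      ∑ ε, walsh n A (Function.update ε j (!ε j)) • f ε :=
    Fintype.sum_equiv (hinv.toPerm _) _ _ fun ε => by
      simp only [Function.Involutive.coe_toPerm, hinv ε]
  simp only [walshCoeff, hflip, walsh_update_not, mul_smul, ← Finset.smul_sum]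
  rw [smul_comm]

lemma walshCoeff_cubeDeriv (n : ℕ) (j : Fin n) (f : (Fin n → Bool) → X) (A : Finset (Fin n)) :
    walshCoeff n (cubeDeriv n j f) A = if j ∈ A then walshCoeff n f A else 0 := by
  have hlin : walshCoeff n (cubeDeriv n j f) A = (2 : ℝ)⁻¹ •
      (walshCoeff n f A - walshCoeff n (fun ε => f (Function.update ε j (!ε j))) A) := by
    simp only [walshCoeff, cubeDeriv, smul_comm _ (2 : ℝ)⁻¹, smul_sub, Finset.sum_sub_distrib,
      ← Finset.smul_sum]
  rw [hlin, walshCoeff_comp_update_not]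
  split_ifs <;> module

lemma cubeCondExp_cubeDeriv_of_notMem (n : ℕ) {T : Finset (Fin n)} {j : Fin n} (hj : j ∉ T)
    (f : (Fin n → Bool) → X) :
    cubeCondExp n T (cubeDeriv n j f) = 0 := by
  funext ε
  rw [Pi.zero_apply, cubeCondExp_eq_sum_walsh]
  refine Finset.sum_eq_zero fun A hA => ?_
  rw [walshCoeff_cubeDeriv, if_neg fun hjA => hj (mem_powerset.1 hA hjA), smul_zero]

lemma swap_apply_mem {α : Type*} [DecidableEq α] {A : Finset α} {a b x : α} (ha : a ∈ A)
    (hb : b ∈ A) (hx : x ∈ A) : Equiv.swap a b x ∈ A := by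
  rw [Equiv.swap_apply_def]
  split_ifs <;> assumption

section PermCount

variable {α : Type*} [Fintype α] [LinearOrder α]

lemma card_filter_perm_isGreatest_eq {A : Finset α} {a b : α} (ha : a ∈ A) (hb : b ∈ A) :
    #{π : Equiv.Perm α | ∀ x ∈ A, π⁻¹ x ≤ π⁻¹ a} =
      #{π : Equiv.Perm α | ∀ x ∈ A, π⁻¹ x ≤ π⁻¹ b} := by
  have hswap {a b : α} (ha : a ∈ A) (hb : b ∈ A) (π : Equiv.Perm α)
      (h : ∀ x ∈ A, π⁻¹ x ≤ π⁻¹ a) (x : α) (hx : x ∈ A) :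
      (Equiv.swap a b * π)⁻¹ x ≤ (Equiv.swap a b * π)⁻¹ b := by
    simpa [mul_inv_rev, Equiv.swap_inv] using h _ (swap_apply_mem ha hb hx)
  refine Finset.card_nbij' (Equiv.swap a b * ·) (Equiv.swap a b * ·) ?_ ?_ ?_ ?_
  · intro π hπ
    simp only [coe_filter, mem_univ, true_and, Set.mem_ofPred_eq] at hπ ⊢
    exact hswap ha hb π hπ
  · intro π hπ
    simp only [coe_filter, mem_univ, true_and, Set.mem_ofPred_eq] at hπ ⊢
    exact Equiv.swap_comm a b ▸ hswap hb ha π hπ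
  all_goals exact fun π _ => Equiv.swap_mul_self_mul a b π

lemma card_filter_perm_isGreatest_mul_card {A : Finset α} {j : α} (hj : j ∈ A) :
    #{π : Equiv.Perm α | ∀ x ∈ A, π⁻¹ x ≤ π⁻¹ j} * #A = (Fintype.card α).factorial := by
  set F : α → Finset (Equiv.Perm α) := fun a => {π | ∀ x ∈ A, π⁻¹ x ≤ π⁻¹ a}
  have hcover : A.biUnion F = univ := by
    refine eq_univ_of_forall fun π => ?_
    obtain ⟨a, ha, hmax⟩ := A.exists_max_image (fun x => π⁻¹ x) ⟨j, hj⟩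
    exact mem_biUnion.2 ⟨a, ha, by simpa [F] using hmax⟩
  have hdisj : (A : Set α).PairwiseDisjoint F := by
    intro a ha b hb hab
    refine Finset.disjoint_left.2 fun π hπa hπb => hab (π⁻¹.injective ?_)
    simp only [F, mem_filter, mem_univ, true_and] at hπa hπb
    exact le_antisymm (hπb a ha) (hπa b hb)
  calc #(F j) * #A = ∑ a ∈ A, #(F a) := by
        rw [Finset.sum_congr rfl fun a ha => card_filter_perm_isGreatest_eq ha hj, sum_const,
          smul_eq_mul, mul_comm]
    _ = (Fintype.card α).factorial := by
        rw [← card_biUnion hdisj, hcover, card_univ, Fintype.card_perm]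

end PermCount

lemma mem_image_firstIdx_iff (n i : ℕ) (π : Equiv.Perm (Fin n)) (a : Fin n) :
    a ∈ (firstIdx n i).image π ↔ ((π⁻¹ a : Fin n) : ℕ) < i := by
  simp only [firstIdx, mem_image, mem_filter, mem_univ, true_and]
  exact ⟨fun ⟨k, hk, hka⟩ => by simpa [← hka] using hk, fun h => ⟨π⁻¹ a, h, by simp⟩⟩

lemma Epi_cubeDeriv_eq_sum (n : ℕ) (π : Equiv.Perm (Fin n)) (j : Fin n)
    (h : (Fin n → Bool) → X) (ε : Fin n → Bool) :
    Epi n π ((π⁻¹ j : Fin n) + 1) (cubeDeriv n j h) ε =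
      ∑ A ∈ univ.filter (j ∈ ·),
        if ∀ a ∈ A, π⁻¹ a ≤ π⁻¹ j then walsh n A ε • walshCoeff n h A else 0 := by
  simp only [Epi, cubeCondExp_eq_sum_walsh, walshCoeff_cubeDeriv, smul_ite, smul_zero,
    ← Finset.sum_filter]
  congr 1
  ext A
  simp only [mem_filter, mem_powerset, mem_univ, true_and, subset_iff, mem_image_firstIdx_iff,
    Nat.lt_succ_iff, Fin.le_def]
  tauto

lemma invLapDeriv_eq_average (n : ℕ) (j : Fin n) (h : (Fin n → Bool) → X) (ε : Fin n → Bool) :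
    invLapDeriv n j h ε =
      (n.factorial : ℝ)⁻¹ • ∑ π : Equiv.Perm (Fin n),
        Epi n π ((π⁻¹ j : Fin n) + 1) (cubeDeriv n j h) ε := by
  simp only [Epi_cubeDeriv_eq_sum]
  rw [Finset.sum_comm, Finset.smul_sum, invLapDeriv]
  refine Finset.sum_congr rfl fun A hA => ?_
  have hjA : j ∈ A := (mem_filter.1 hA).2
  have hcount : (#{π : Equiv.Perm (Fin n) | ∀ a ∈ A, π⁻¹ a ≤ π⁻¹ j} : ℝ) * #A = n.factorial := by
    have := card_filter_perm_isGreatest_mul_card hjA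
    rw [Fintype.card_fin] at this
    norm_cast
    -- the two filters carry different decidability instances
    convert this
  have hA0 : (#A : ℝ) ≠ 0 := Nat.cast_ne_zero.2 (card_ne_zero_of_mem hjA)
  have hF0 := left_ne_zero_of_mul (hcount ▸ Nat.cast_ne_zero.2 n.factorial_ne_zero)
  rw [← Finset.sum_filter, sum_const, ← Nat.cast_smul_eq_nsmul ℝ, smul_smul, smul_smul,
    ← hcount]
  congr 1
  field_simp

lemma sum_invLapDeriv_eq_average (n : ℕ) (f : Fin n → (Fin n → Bool) → X) (ε : Fin n → Bool) :
    ∑ j : Fin n, invLapDeriv n j (f j) ε =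
      (n.factorial : ℝ)⁻¹ • ∑ π : Equiv.Perm (Fin n),
        ∑ i : Fin n, Epi n π ((i : ℕ) + 1) (cubeDeriv n (π i) (f (π i))) ε := by
  have hreindex (π : Equiv.Perm (Fin n)) :
      ∑ i : Fin n, Epi n π ((i : ℕ) + 1) (cubeDeriv n (π i) (f (π i))) ε =
        ∑ j : Fin n, Epi n π ((π⁻¹ j : Fin n) + 1) (cubeDeriv n j (f j)) ε :=
    Fintype.sum_equiv π _ _ fun i => by simp
  simp only [hreindex, invLapDeriv_eq_average]
  rw [Finset.sum_comm, Finset.smul_sum]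

lemma Epi_idem (n : ℕ) (π : Equiv.Perm (Fin n)) (k : ℕ) (h : (Fin n → Bool) → X) :
    Epi n π k (Epi n π k h) = Epi n π k h :=
  cubeCondExp_cubeCondExp_of_subset n subset_rfl h

lemma Epi_Epi_succ_cubeDeriv_eq_zero (n : ℕ) (π : Equiv.Perm (Fin n)) (i : Fin n)
    (h : (Fin n → Bool) → X) :
    Epi n π i (Epi n π (i + 1) (cubeDeriv n (π i) h)) = 0 := by
  have hsub : (firstIdx n i).image π ⊆ (firstIdx n (i + 1)).image π := fun a ha => by
    rw [mem_image_firstIdx_iff] at ha ⊢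
    omega
  have hnot : π i ∉ (firstIdx n i).image π := by simp [firstIdx]
  rw [Epi, Epi, cubeCondExp_cubeCondExp_of_subset n hsub, cubeCondExp_cubeDeriv_of_notMem n hnot]

omit [NormedSpace ℝ X] in
lemma cubeLpNorm_eq_mul_norm_toLp (n : ℕ) {p : ℝ} (hp : 0 < p) (f : (Fin n → Bool) → X) :
    cubeLpNorm n p f = ((2 : ℝ) ^ n)⁻¹ ^ (1 / p) * ‖WithLp.toLp (ENNReal.ofReal p) f‖ := by
  rw [cubeLpNorm, PiLp.norm_eq_sum (by rwa [ENNReal.toReal_ofReal hp.le]),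
    ENNReal.toReal_ofReal hp.le, Real.mul_rpow (by positivity) (by positivity)]

lemma cubeLpNorm_smul (n : ℕ) {p : ℝ} (hp : 1 ≤ p) (c : ℝ) (f : (Fin n → Bool) → X) :
    cubeLpNorm n p (fun ε => c • f ε) = |c| * cubeLpNorm n p f := by
  have : Fact (1 ≤ ENNReal.ofReal p) := ⟨ENNReal.one_le_ofReal.2 hp⟩
  simp only [cubeLpNorm_eq_mul_norm_toLp n (one_pos.trans_le hp)]
  rw [← Pi.smul_def, WithLp.toLp_smul, norm_smul, Real.norm_eq_abs]
  ring

omit [NormedSpace ℝ X] in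
lemma cubeLpNorm_sum_le (n : ℕ) {p : ℝ} (hp : 1 ≤ p) {ι : Type*} (s : Finset ι)
    (F : ι → (Fin n → Bool) → X) :
    cubeLpNorm n p (fun ε => ∑ i ∈ s, F i ε) ≤ ∑ i ∈ s, cubeLpNorm n p (F i) := by
  have : Fact (1 ≤ ENNReal.ofReal p) := ⟨ENNReal.one_le_ofReal.2 hp⟩
  simp only [cubeLpNorm_eq_mul_norm_toLp n (one_pos.trans_le hp), ← Finset.mul_sum]
  rw [← Finset.sum_fn, WithLp.toLp_sum]
  gcongr
  exact norm_sum_le _ _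

lemma cubeLpNorm_average_le (n : ℕ) {p : ℝ} (hp : 1 ≤ p) {ι : Type*} [Fintype ι] [Nonempty ι]
    (F : ι → (Fin n → Bool) → X) {C : ℝ} (hC : ∀ i, cubeLpNorm n p (F i) ≤ C) :
    cubeLpNorm n p (fun ε => (Fintype.card ι : ℝ)⁻¹ • ∑ i, F i ε) ≤ C := by
  have hcard : (0 : ℝ) < Fintype.card ι := by exact_mod_cast Fintype.card_pos
  calc cubeLpNorm n p (fun ε => (Fintype.card ι : ℝ)⁻¹ • ∑ i, F i ε)
      ≤ (Fintype.card ι : ℝ)⁻¹ * ∑ i, cubeLpNorm n p (F i) := by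
        rw [cubeLpNorm_smul n hp, abs_of_pos (inv_pos.2 hcard)]
        gcongr
        exact cubeLpNorm_sum_le n hp univ F
    _ ≤ (Fintype.card ι : ℝ)⁻¹ * ∑ _i : ι, C := by gcongr with i; exact hC i
    _ = C := by rw [sum_const, card_univ, nsmul_eq_mul, inv_mul_cancel_left₀ hcard.ne']

def rademacherNorm (n : ℕ) (p : ℝ) (g : Fin n → (Fin n → Bool) → X) : ℝ :=
  (((2 : ℝ) ^ n)⁻¹ * ∑ δ : Fin n → Bool,
    (cubeLpNorm n p fun ε => ∑ i : Fin n, sgn (δ i) • g i ε) ^ p) ^ (1 / p)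

lemma rademacherNorm_comp_perm (n : ℕ) (p : ℝ) (π : Equiv.Perm (Fin n))
    (g : Fin n → (Fin n → Bool) → X) :
    rademacherNorm n p (fun i => g (π i)) = rademacherNorm n p g := by
  have hreindex (δ : Fin n → Bool) (ε : Fin n → Bool) :
      ∑ i, sgn (δ i) • g (π i) ε = ∑ i, sgn (δ (π⁻¹ i)) • g i ε :=
    Fintype.sum_equiv π _ _ fun i => by simp
  simp only [rademacherNorm, hreindex]
  congr 2
  exact Fintype.sum_equiv (π.arrowCongr (Equiv.refl Bool)) _ _ fun δ => rfl

lemma cubeLpNorm_sum_Epi_cubeDeriv_le {p s b : ℝ} (hStein : SteinIneq X p s)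
    (hUMD : UMDminusIneq X p b) (hb : 0 ≤ b) {n : ℕ} (hn : 0 < n) (π : Equiv.Perm (Fin n))
    (f : Fin n → (Fin n → Bool) → X) :
    cubeLpNorm n p (fun ε => ∑ i : Fin n, Epi n π (i + 1) (cubeDeriv n (π i) (f (π i))) ε) ≤
      s * b * rademacherNorm n p (fun i => cubeDeriv n i (f i)) := by
  set d : Fin n → (Fin n → Bool) → X := fun i => Epi n π (i + 1) (cubeDeriv n (π i) (f (π i)))
  have hmart (i : Fin n) : Epi n π (i + 1) (d i) = d i ∧ Epi n π i (d i) = 0 :=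
    ⟨Epi_idem n π _ _, Epi_Epi_succ_cubeDeriv_eq_zero n π i _⟩
  calc cubeLpNorm n p (fun ε => ∑ i, d i ε)
      ≤ b * rademacherNorm n p d := hUMD n hn π d hmart
    _ ≤ b * (s * rademacherNorm n p (fun i => cubeDeriv n (π i) (f (π i)))) := by
        gcongr
        exact hStein n hn π _
    _ = s * b * rademacherNorm n p (fun i => cubeDeriv n i (f i)) := by
        rw [rademacherNorm_comp_perm n p π fun i => cubeDeriv n i (f i)]
        ring

theorem invLaplacian_pisier_general (p s b : ℝ) (hp : 1 < p) (hb : 0 < b)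
    (X : Type*) [NormedAddCommGroup X] [NormedSpace ℝ X]
    (hStein : SteinIneq X p s) (hUMD : UMDminusIneq X p b)
    (n : ℕ) (hn : 0 < n) (f : Fin n → (Fin n → Bool) → X) :
    cubeLpNorm n p (fun ε => ∑ i : Fin n, invLapDeriv n i (f i) ε)
      ≤ s * b * (((2 : ℝ) ^ n)⁻¹ * ∑ δ : Fin n → Bool,
          (cubeLpNorm n p fun ε =>
            ∑ i : Fin n, sgn (δ i) • cubeDeriv n i (f i) ε) ^ p) ^ (1 / p) := by
  have hcard : (n.factorial : ℝ) = Fintype.card (Equiv.Perm (Fin n)) := by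
    rw [Fintype.card_perm, Fintype.card_fin]
  simp only [sum_invLapDeriv_eq_average, hcard]
  exact cubeLpNorm_average_le n hp.le _
    (cubeLpNorm_sum_Epi_cubeDeriv_le hStein hUMD hb.le hn · f)

/-- **Corollary of the paper**: under the Stein and UMD⁻ hypotheses,
`‖Σᵢ Δ⁻¹∂ᵢfᵢ‖_p ≤ s·b·(2⁻ⁿ Σ_δ ‖Σᵢ δᵢ∂ᵢfᵢ‖_p^p)^{1/p}`. -/
theorem invLaplacian_pisier (p s b : ℝ) (hp : 1 < p) (hs : 0 < s) (hb : 0 < b)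
    (X : Type*) [NormedAddCommGroup X] [NormedSpace ℝ X] [CompleteSpace X]
    (hStein : SteinIneq X p s) (hUMD : UMDminusIneq X p b)
    (n : ℕ) (hn : 0 < n) (f : Fin n → (Fin n → Bool) → X) :
    cubeLpNorm n p (fun ε => ∑ i : Fin n, invLapDeriv n i (f i) ε)
      ≤ s * b * (((2 : ℝ) ^ n)⁻¹ * ∑ δ : Fin n → Bool,
          (cubeLpNorm n p fun ε =>
            ∑ i : Fin n, sgn (δ i) • cubeDeriv n i (f i) ε) ^ p) ^ (1 / p) :=
  invLaplacian_pisier_general p s b hp hb X hStein hUMD n hn f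
end
end

section
/- Let p ∈ (1,∞) and let X be a real Banach space that satisfies the hypercube Stein inequality with constant 𝔰 for exponent p and the hypercube UMD⁻ inequality with constant β for exponent p. Then for every positive integer n and all functions f_1,…,f_n : 𝒞_n → X, one has ‖Σ_{i=1}^n 𝔈_i ∂_i f_i‖_{L_p(𝒞_n;X)} ≤ 𝔰 β (2^{−n} Σ_{δ∈𝒞_n} ‖Σ_{i=1}^n δ_i ∂_i f_i‖_{L_p(𝒞_n;X)}^p)^{1/p}. -/
noncomputable section

open Finset

variable {X : Type*} [NormedAddCommGroup X] [NormedSpace ℝ X]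

section AuxLemmas

variable {X : Type*} [NormedAddCommGroup X] [NormedSpace ℝ X]

/-- Cardinality of the agreement set. -/
lemma agr_card (n : ℕ) (S : Finset (Fin n)) (ε : Fin n → Bool) :
    (univ.filter (fun η : Fin n → Bool => ∀ j ∈ S, η j = ε j)).card = 2 ^ (n - S.card) := by
  have h : univ.filter (fun η : Fin n → Bool => ∀ j ∈ S, η j = ε j)
      = Fintype.piFinset (fun j => if j ∈ S then ({ε j} : Finset Bool) else univ) := by
    ext η
    simp only [mem_filter, mem_univ, true_and, Fintype.mem_piFinset]
    constructor
    · intro h j; by_cases hj : j ∈ S <;> simp [hj, h]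
    · intro h j hj; have := h j; simpa [hj] using this
  rw [h, Fintype.card_piFinset]
  have hcard : ∀ j : Fin n, (if j ∈ S then ({ε j} : Finset Bool) else univ).card
      = if j ∈ S then 1 else 2 := by
    intro j; by_cases hj : j ∈ S <;> simp [hj]
  simp only [hcard]
  rw [Finset.prod_ite, Finset.prod_const, Finset.prod_const, one_pow, one_mul]
  congr 1
  have h2 : (univ.filter (fun j : Fin n => ¬ j ∈ S)) = Sᶜ := by ext j; simp
  rw [h2, Finset.card_compl, Fintype.card_fin]

/-- Tower property of conditional expectations on the cube. -/
lemma condExp_condExp (n : ℕ) (S T : Finset (Fin n)) (hST : S ⊆ T)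
    (f : (Fin n → Bool) → X) :
    cubeCondExp n S (cubeCondExp n T f) = cubeCondExp n S f := by
  funext ε
  simp only [cubeCondExp]
  rw [← Finset.smul_sum, smul_smul]
  rw [Finset.sum_comm'
    (s := univ.filter (fun η : Fin n → Bool => ∀ j ∈ S, η j = ε j))
    (t := fun η => univ.filter (fun ζ : Fin n → Bool => ∀ j ∈ T, ζ j = η j))
    (t' := univ.filter (fun ζ : Fin n → Bool => ∀ j ∈ S, ζ j = ε j))
    (s' := fun ζ => univ.filter (fun η : Fin n → Bool => ∀ j ∈ T, η j = ζ j))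
    (f := fun _ ζ => f ζ) ?_]
  · simp only [Finset.sum_const, agr_card]
    simp only [← Nat.cast_smul_eq_nsmul ℝ]
    rw [← Finset.smul_sum, smul_smul]
    congr 1
    push_cast
    have h2 : ((2:ℝ) ^ (n - T.card)) ≠ 0 := by positivity
    field_simp
  · intro η ζ
    simp only [mem_filter, mem_univ, true_and]
    constructor
    · rintro ⟨h1, h2⟩
      refine ⟨fun j hj => (h2 j hj).symm, fun j hj => by rw [h2 j (hST hj), h1 j hj]⟩
    · rintro ⟨h1, h2⟩
      refine ⟨fun j hj => by rw [h1 j (hST hj), h2 j hj], fun j hj => (h1 j hj).symm⟩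

/-- Conditional expectation kills the `i`-th derivative when `i` is not conditioned on. -/
lemma condExp_deriv_zero (n : ℕ) (S : Finset (Fin n)) (i : Fin n) (hi : i ∉ S)
    (f : (Fin n → Bool) → X) :
    cubeCondExp n S (cubeDeriv n i f) = 0 := by
  funext ε
  simp only [cubeCondExp, Pi.zero_apply]
  rw [Finset.sum_involution (g := fun η _ => Function.update η i (!(η i)))
    ?h1 ?h2 ?h3 ?h4, smul_zero]
  case h1 =>
    intro η _
    have hupd : Function.update (Function.update η i (!(η i))) i
        (!(Function.update η i (!(η i)) i)) = η := by
      simp [Function.update_idem]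
    simp only [cubeDeriv, hupd]
    rw [← smul_add]
    simp [sub_add_sub_cancel']
  case h2 =>
    intro η _ _ h
    have := congrFun h i
    simp at this
  case h3 =>
    intro η hη
    simp only [mem_filter, mem_univ, true_and] at hη ⊢
    intro j hj
    have hji : j ≠ i := fun h => hi (h ▸ hj)
    rw [Function.update_of_ne hji, hη j hj]
  case h4 =>
    intro η _
    simp [Function.update_idem]

/-- With the identity permutation, `𝔈_i^π = 𝔈_i`. -/
lemma Epi_one {n : ℕ} (k : ℕ) (f : (Fin n → Bool) → X) :
    Epi n (1 : Equiv.Perm (Fin n)) k f = Ei n k f := by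
  simp [Epi, Ei, Finset.image_id]

lemma firstIdx_subset_succ (n i : ℕ) : firstIdx n i ⊆ firstIdx n (i + 1) := by
  intro j hj
  simp only [firstIdx, mem_filter, mem_univ, true_and] at hj ⊢
  omega

lemma notMem_firstIdx (n : ℕ) (i : Fin n) : i ∉ firstIdx n (i : ℕ) := by
  simp [firstIdx]

end AuxLemmas

/-- Equivalent form of the main theorem:
`‖Σᵢ 𝔈ᵢ∂ᵢfᵢ‖_p ≤ s·b·(2⁻ⁿ Σ_δ ‖Σᵢ δᵢ∂ᵢfᵢ‖_p^p)^{1/p}`. -/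
theorem pisier_umd_condExp_form (p s b : ℝ) (hp : 1 < p) (hs : 0 < s) (hb : 0 < b)
    (X : Type*) [NormedAddCommGroup X] [NormedSpace ℝ X] [CompleteSpace X]
    (hStein : SteinIneq X p s) (hUMD : UMDminusIneq X p b)
    (n : ℕ) (hn : 0 < n) (f : Fin n → (Fin n → Bool) → X) :
    cubeLpNorm n p (fun ε => ∑ i : Fin n, Ei n ((i : ℕ) + 1) (cubeDeriv n i (f i)) ε)
      ≤ s * b * (((2 : ℝ) ^ n)⁻¹ * ∑ δ : Fin n → Bool,
          (cubeLpNorm n p fun ε =>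
            ∑ i : Fin n, sgn (δ i) • cubeDeriv n i (f i) ε) ^ p) ^ (1 / p) := by
  set g : Fin n → (Fin n → Bool) → X := fun i => cubeDeriv n i (f i) with hg
  set d : Fin n → (Fin n → Bool) → X := fun i => Ei n ((i : ℕ) + 1) (g i) with hd
  have hcond : ∀ i : Fin n, Epi n (1 : Equiv.Perm (Fin n)) ((i : ℕ) + 1) (d i) = d i ∧
      Epi n (1 : Equiv.Perm (Fin n)) (i : ℕ) (d i) = 0 := by
    intro i
    constructor
    · rw [Epi_one]
      exact condExp_condExp n _ _ (le_refl _) _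
    · rw [Epi_one]
      show Ei n (i : ℕ) (Ei n ((i : ℕ) + 1) (g i)) = 0
      rw [show Ei n (i : ℕ) (Ei n ((i : ℕ) + 1) (g i)) = Ei n (i : ℕ) (g i) from
        condExp_condExp n _ _ (firstIdx_subset_succ n (i : ℕ)) _]
      exact condExp_deriv_zero n _ i (notMem_firstIdx n i) (f i)
  have h1 := hUMD n hn 1 d hcond
  have h2 := hStein n hn 1 g
  simp only [Epi_one] at h2
  calc cubeLpNorm n p (fun ε => ∑ i : Fin n, Ei n ((i : ℕ) + 1) (cubeDeriv n i (f i)) ε)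
      = cubeLpNorm n p (fun ε => ∑ i : Fin n, d i ε) := rfl
    _ ≤ b * (((2 : ℝ) ^ n)⁻¹ * ∑ δ : Fin n → Bool,
          (cubeLpNorm n p fun ε => ∑ i : Fin n, sgn (δ i) • d i ε) ^ p) ^ (1 / p) := h1
    _ ≤ b * (s * (((2 : ℝ) ^ n)⁻¹ * ∑ δ : Fin n → Bool,
          (cubeLpNorm n p fun ε => ∑ i : Fin n, sgn (δ i) • g i ε) ^ p) ^ (1 / p)) := by
        exact mul_le_mul_of_nonneg_left h2 hb.le
    _ = s * b * (((2 : ℝ) ^ n)⁻¹ * ∑ δ : Fin n → Bool,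
          (cubeLpNorm n p fun ε => ∑ i : Fin n, sgn (δ i) • cubeDeriv n i (f i) ε) ^ p) ^ (1 / p) := by
        rw [hg]; ring
end
end
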